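/- arXiv:1103.2349 — 10 statements merged into one kernel-verified Lean document; each statement's English description precedes it below -/
import Mathlib

section
/- For every y ∈ ℓ¹, ⟨y, G(y)⟩ = ∑_n y_n (G(y))_n = 0; that is, the Gossez operator is anti-symmetric in the sense that the associated quadratic form vanishes. -/
open Filter Topology

/-- The Gossez operator, with sequences indexed from `0`:
entry `n` (paper index `n+1`) is `∑_{i ≥ n+1} y i − ∑_{i ≤ n-1} y i`. -/
noncomputable def G (y : ℕ → ℝ) (n : ℕ) : ℝ :=
  (∑' i : ℕ, y (n + 1 + i)) - ∑ i ∈ Finset.range n, y i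

/-! Writing `S N` for the partial sums and `T` for the sum of `y`, one has
`G y n = T - S (n + 1) - S n`, so the partial sums of `y n * G y n` telescope to `S N * (T - S N)`,
which tends to `0`. Absolute convergence of the series comes from `|G y n| ≤ ∑' i, |y i|`. -/

section

variable {y : ℕ → ℝ}

theorem G_eq_tsum_sub (hy : Summable y) (n : ℕ) :
    G y n = ∑' i, y i - ∑ i ∈ Finset.range (n + 1), y i - ∑ i ∈ Finset.range n, y i := by
  have hsplit := hy.sum_add_tsum_nat_add (n + 1)
  simp_rw [G, add_comm (n + 1)]
  linarith

theorem abs_G_le (hy : Summable fun i => |y i|) (n : ℕ) : |G y n| ≤ ∑' i, |y i| := by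
  have htail : |∑' i, y (n + 1 + i)| ≤ ∑' i, |y (i + (n + 1))| := by
    simp_rw [add_comm (n + 1)]
    exact norm_tsum_le_tsum_norm (f := fun i => y (i + (n + 1)))
      ((summable_nat_add_iff (n + 1)).mpr hy)
  have hhead : |∑ i ∈ Finset.range n, y i| ≤ ∑ i ∈ Finset.range n, |y i| :=
    Finset.abs_sum_le_sum_abs _ _
  calc |G y n| ≤ |∑' i, y (n + 1 + i)| + |∑ i ∈ Finset.range n, y i| := abs_sub _ _
    _ ≤ ∑ i ∈ Finset.range n, |y i| + |y n| + ∑' i, |y (i + (n + 1))| := by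
      linarith [abs_nonneg (y n)]
    _ = ∑' i, |y i| := by
      rw [← Finset.sum_range_succ, hy.sum_add_tsum_nat_add]

theorem summable_mul_G (hy : Summable fun i => |y i|) : Summable fun n => y n * G y n := by
  refine summable_abs_iff.mp (hy.mul_right (∑' i, |y i|) |>.of_nonneg_of_le
    (fun n => abs_nonneg _) fun n => ?_)
  rw [abs_mul]
  exact mul_le_mul_of_nonneg_left (abs_G_le hy n) (abs_nonneg _)

theorem sum_range_mul_G (hy : Summable y) (N : ℕ) :
    ∑ n ∈ Finset.range N, y n * G y n =
      (∑ i ∈ Finset.range N, y i) * (∑' i, y i - ∑ i ∈ Finset.range N, y i) := by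
  induction N with
  | zero => simp
  | succ N ih =>
    rw [Finset.sum_range_succ, ih, G_eq_tsum_sub hy, Finset.sum_range_succ y N]
    ring

end

/-- The quadratic form of the Gossez operator vanishes: `⟪y, G y⟫ = 0`. -/
theorem gossez_quadratic_form_zero (y : ℕ → ℝ) (hy : Summable fun i => |y i|) :
    ∑' n, y n * G y n = 0 := by
  have hy' : Summable y := summable_abs_iff.mp hy
  have hS : Tendsto (fun N => ∑ i ∈ Finset.range N, y i) atTop (𝓝 (∑' i, y i)) :=
    hy'.hasSum.tendsto_sum_nat
  have hpartial := (summable_mul_G hy).hasSum.tendsto_sum_nat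
  simp only [sum_range_mul_G hy'] at hpartial
  have hzero := hS.mul ((tendsto_const_nhds (x := ∑' i, y i)).sub hS)
  rw [sub_self, mul_zero] at hzero
  exact tendsto_nhds_unique hpartial hzero
end

section
/- The Gossez operator satisfies the anti-symmetry identity ⟨x, G(y)⟩ = −⟨y, G(x)⟩ for all x, y ∈ ℓ¹. -/
open Filter Topology

/-!
`G` is the integral operator `(G y) n = ∑ₘ sign (m - n) y m` whose kernel is bounded and
antisymmetric. For such a kernel the double series `∑ₙ ∑ₘ x n K n m y m` converges absolutely
when `x, y ∈ ℓ¹`, so its value does not depend on the order of summation; exchanging the roles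
of `n` and `m` then flips the sign.
-/

section AntisymmetricKernel

variable {ι : Type*} {K : ι → ι → ℝ} {C : ℝ} {x y : ι → ℝ}

lemma summable_mul_kernel_mul (hK : ∀ n m, |K n m| ≤ C)
    (hx : Summable fun i => |x i|) (hy : Summable fun i => |y i|) :
    Summable fun p : ι × ι => x p.1 * (K p.1 p.2 * y p.2) := by
  have hC : Summable fun p : ι × ι => C * (|x p.1| * |y p.2|) :=
    (hx.mul_of_nonneg hy (fun _ => abs_nonneg _) (fun _ => abs_nonneg _)).mul_left C
  refine .of_norm_bounded hC fun p => ?_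
  rw [Real.norm_eq_abs, abs_mul, abs_mul]
  calc |x p.1| * (|K p.1 p.2| * |y p.2|)
      ≤ |x p.1| * (C * |y p.2|) := by gcongr; exact hK _ _
    _ = C * (|x p.1| * |y p.2|) := by ring

lemma tsum_mul_tsum_kernel_mul_eq_tsum_prod (hK : ∀ n m, |K n m| ≤ C)
    (hx : Summable fun i => |x i|) (hy : Summable fun i => |y i|) :
    ∑' n, x n * ∑' m, K n m * y m = ∑' p : ι × ι, x p.1 * (K p.1 p.2 * y p.2) := by
  have hrow : ∀ n, Summable fun m => K n m * y m := fun n =>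
    .of_norm_bounded (hy.mul_left C) fun m => by
      rw [Real.norm_eq_abs, abs_mul]
      exact mul_le_mul_of_nonneg_right (hK n m) (abs_nonneg _)
  rw [(summable_mul_kernel_mul hK hx hy).tsum_prod' fun n => (hrow n).mul_left (x n)]
  simp_rw [tsum_mul_left]

theorem tsum_mul_tsum_kernel_mul_of_antisymm (hK : ∀ n m, |K n m| ≤ C)
    (hanti : ∀ n m, K m n = -K n m)
    (hx : Summable fun i => |x i|) (hy : Summable fun i => |y i|) :
    ∑' n, x n * ∑' m, K n m * y m = -∑' n, y n * ∑' m, K n m * x m := by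
  rw [tsum_mul_tsum_kernel_mul_eq_tsum_prod hK hx hy,
    tsum_mul_tsum_kernel_mul_eq_tsum_prod hK hy hx,
    ← (Equiv.prodComm ι ι).tsum_eq, ← tsum_neg]
  congr 1
  ext ⟨n, m⟩
  simp only [Equiv.prodComm_apply, Prod.swap_prod_mk, hanti n m]
  ring

end AntisymmetricKernel

noncomputable def gossezKernel (n m : ℕ) : ℝ :=
  SignType.sign ((m : ℝ) - n)

lemma gossezKernel_swap (n m : ℕ) : gossezKernel m n = -gossezKernel n m := by
  rw [gossezKernel, gossezKernel, ← neg_sub, Left.sign_neg, SignType.coe_neg]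

lemma abs_gossezKernel_le_one (n m : ℕ) : |gossezKernel n m| ≤ 1 := by
  unfold gossezKernel
  cases SignType.sign ((m : ℝ) - n) <;> norm_num

lemma hasSum_gossezKernel_mul {y : ℕ → ℝ} (hy : Summable y) (n : ℕ) :
    HasSum (fun m => gossezKernel n m * y m) (G y n) := by
  rw [← hasSum_nat_add_iff' (n + 1), Finset.sum_range_succ]
  have htail : ∀ i, gossezKernel n (i + (n + 1)) * y (i + (n + 1)) = y (n + 1 + i) := by
    intro i
    rw [gossezKernel, sign_pos (by push_cast; linarith), add_comm i]
    simp
  have hhead : ∑ i ∈ Finset.range n, gossezKernel n i * y i = -∑ i ∈ Finset.range n, y i := by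
    rw [← Finset.sum_neg_distrib]
    refine Finset.sum_congr rfl fun i hi => ?_
    have hi : (i : ℝ) < n := by exact_mod_cast Finset.mem_range.mp hi
    rw [gossezKernel, sign_neg (by linarith)]
    simp
  have hdiag : gossezKernel n n * y n = 0 := by simp [gossezKernel]
  rw [hdiag, add_zero, hhead, G, sub_neg_eq_add, sub_add_cancel]
  simp only [htail]
  exact (hy.comp_injective (add_right_injective (n + 1))).hasSum

/-- Anti-symmetry of the Gossez operator: `⟪x, G y⟫ = -⟪y, G x⟫`. -/
theorem gossez_antisymmetric (x y : ℕ → ℝ)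
    (hx : Summable fun i => |x i|) (hy : Summable fun i => |y i|) :
    ∑' n, x n * G y n = -∑' n, y n * G x n := by
  have hG : ∀ z : ℕ → ℝ, (Summable fun i => |z i|) →
      G z = fun n => ∑' m, gossezKernel n m * z m := fun z hz =>
    funext fun n => ((hasSum_gossezKernel_mul hz.of_abs n).tsum_eq).symm
  rw [hG y hy, hG x hx]
  exact tsum_mul_tsum_kernel_mul_of_antisymm abs_gossezKernel_le_one gossezKernel_swap hx hy
end

section
/- The Gossez operator G : ℓ¹ → ℓ∞, viewed as a linear monotone operator (its graph {(y, G(y))} in ℓ¹ × ℓ∞), is maximal monotone: if (y, z) ∈ ℓ¹ × ℓ∞ satisfies ⟨y − y', z − G(y')⟩ ≥ 0 for all y' ∈ ℓ¹, then z = G(y). -/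
open Filter Topology

/-!
Test the hypothesis against `y' = y - t e_k`. Since `(G y)_k` does not involve `y_k`, the
perturbation leaves `(G y')_k = (G y)_k`, so the pairing collapses to the single term
`t (z_k - (G y)_k)`. Being nonnegative for every real `t`, this term forces `z_k = (G y)_k`.
-/

open Function

lemma G_update_self (y : ℕ → ℝ) (k : ℕ) (a : ℝ) : G (update y k a) k = G y k := by
  unfold G
  congr 1
  · exact tsum_congr fun i => update_of_ne (by omega) _ _
  · exact Finset.sum_congr rfl fun i hi => update_of_ne (Finset.mem_range.mp hi).ne _ _

lemma summable_abs_update {y : ℕ → ℝ} (hy : Summable fun i => |y i|) (k : ℕ) (a : ℝ) :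
    Summable fun i => |update y k a i| :=
  ((summable_abs_iff.mp hy).update k a).abs

lemma tsum_mul_sub_G_update_sub (y z : ℕ → ℝ) (k : ℕ) (t : ℝ) :
    ∑' n, (y n - update y k (y k - t) n) * (z n - G (update y k (y k - t)) n)
      = t * (z k - G y k) := by
  rw [tsum_eq_single k fun n hn => by simp [update_of_ne hn]]
  simp [G_update_self]

lemma eq_zero_of_forall_mul_nonneg {c : ℝ} (h : ∀ t : ℝ, 0 ≤ t * c) : c = 0 := by
  nlinarith [h (-c)]

theorem gossez_maximal_monotone_general (y z : ℕ → ℝ)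
    (hy : Summable fun i => |y i|)
    (h : ∀ y' : ℕ → ℝ, Summable (fun i => |y' i|) →
      ∑' n, (y n - y' n) * (z n - G y' n) ≥ 0) :
    z = G y := by
  funext k
  refine sub_eq_zero.mp (eq_zero_of_forall_mul_nonneg fun t => ?_)
  have hpair := h _ (summable_abs_update hy k (y k - t))
  rwa [tsum_mul_sub_G_update_sub] at hpair

/-- The Gossez operator, as a monotone operator from l1 to linf, is maximal monotone:
any pair `(y, z)` monotonically related to its graph lies in the graph. -/
theorem gossez_maximal_monotone (y z : ℕ → ℝ)
    (hy : Summable fun i => |y i|) (hz : BddAbove (Set.range fun n => |z n|))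
    (h : ∀ y' : ℕ → ℝ, Summable (fun i => |y' i|) →
      ∑' n, (y n - y' n) * (z n - G y' n) ≥ 0) :
    z = G y :=
  gossez_maximal_monotone_general y z hy h
end

section
/- For every y ∈ ℓ¹, the sequence G(y) converges, with lim_{n→∞} (G(y))_n = −∑_{i=1}^∞ y_i. Consequently, G(y) ∈ c₀ if and only if ∑_{i=1}^∞ y_i = 0. -/
open Filter Topology

theorem tendsto_tsum_nat_add_succ {E : Type*} [AddCommGroup E] [TopologicalSpace E]
    [IsTopologicalAddGroup E] [T2Space E] (f : ℕ → E) :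
    Tendsto (fun n => ∑' i, f (n + 1 + i)) atTop (𝓝 0) := by
  refine ((tendsto_sum_nat_add f).comp (tendsto_add_atTop_nat 1)).congr fun n => ?_
  exact tsum_congr fun i => by rw [add_comm i]

theorem tendsto_G {y : ℕ → ℝ} (hy : Summable y) : Tendsto (G y) atTop (𝓝 (-∑' i, y i)) := by
  have h := (tendsto_tsum_nat_add_succ y).sub hy.hasSum.tendsto_sum_nat
  rwa [zero_sub] at h

/-- For `y` in l1, `(G y) n` tends to `-∑ i, y i`; hence `G y ∈ c₀` iff `∑ i, y i = 0`. -/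
theorem gossez_limit (y : ℕ → ℝ) (hy : Summable fun i => |y i|) :
    Tendsto (G y) atTop (𝓝 (-∑' i, y i)) ∧
    (Tendsto (G y) atTop (𝓝 0) ↔ (∑' i, y i) = 0) := by
  have hlim := tendsto_G hy.of_abs
  refine ⟨hlim, fun h0 => neg_eq_zero.mp (tendsto_nhds_unique hlim h0), fun hsum => ?_⟩
  simpa only [hsum, neg_zero] using hlim
end

section
/- The operator T : c₀ ⇉ ℓ¹ defined by T(x) = {y ∈ ℓ¹ : −G(y) = x} has range exactly {y ∈ ℓ¹ : ∑_{i=1}^∞ y_i = 0}. -/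
open Filter Topology

/-! With `S` the partial sums, `-G y n = S (n+1) + S n - ∑' y`, so for `y ∈ ℓ¹` the sequence `-G y`
converges to `∑' y`; it therefore lies in `c₀` exactly when `∑' y = 0`. -/

lemma neg_G_eq_sum_range_add_sum_range_sub_tsum {y : ℕ → ℝ} (hy : Summable y) (n : ℕ) :
    -G y n = (∑ i ∈ Finset.range (n + 1), y i) + (∑ i ∈ Finset.range n, y i) - ∑' i, y i := by
  have htail : ∑' i, y (n + 1 + i) = ∑' i, y (i + (n + 1)) := by
    simp only [Nat.add_comm (n + 1)]
  rw [G, htail, ← hy.sum_add_tsum_nat_add (n + 1)]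
  ring

lemma tendsto_neg_G {y : ℕ → ℝ} (hy : Summable y) :
    Tendsto (fun n => -G y n) atTop (𝓝 (∑' i, y i)) := by
  have hS := hy.hasSum.tendsto_sum_nat
  have hS' := hS.comp (tendsto_add_atTop_nat 1)
  simpa [neg_G_eq_sum_range_add_sum_range_sub_tsum hy] using (hS'.add hS).sub_const (∑' i, y i)

/-- The range of `T : c₀ ⇉ l1`, `T x = {y : -G y = x}`, is `{y ∈ l1 : ∑ i, y i = 0}`. -/
theorem range_T :
    {y : ℕ → ℝ | Summable (fun i => |y i|) ∧
      ∃ x : ℕ → ℝ, Tendsto x atTop (𝓝 0) ∧ (fun n => -G y n) = x} =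
    {y : ℕ → ℝ | Summable (fun i => |y i|) ∧ (∑' i, y i) = 0} := by
  refine Set.ext fun y => and_congr_right fun hs => ?_
  have hlim := tendsto_neg_G (summable_abs_iff.mp hs)
  constructor
  · rintro ⟨x, hx, rfl⟩
    exact tendsto_nhds_unique hlim hx
  · intro hsum
    exact ⟨_, hsum ▸ hlim, rfl⟩
end

section
/- The operator T : c₀ ⇉ ℓ¹, T(x) = {y ∈ ℓ¹ : −G(y) = x}, is single-valued on its domain: if y, y' ∈ ℓ¹ and −G(y) = −G(y') = x, then y = y'. -/
/-!
Consecutive entries of `G y` differ by `y n + y (n+1)`, so if `G y = G y'` the difference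
`d = y - y'` satisfies `d (n+1) = -d n`. Hence `|d n|` is constant, and since `d` is summable
it tends to `0`, forcing `d = 0`.
-/

open Filter Topology

lemma G_sub_G_succ {y : ℕ → ℝ} (hy : Summable y) (n : ℕ) :
    G y n - G y (n + 1) = y n + y (n + 1) := by
  have htail : ∑' i, y (n + 1 + i) = y (n + 1) + ∑' i, y (n + 1 + 1 + i) := by
    have hshift : Summable fun i => y (n + 1 + i) := hy.comp_injective (add_right_injective _)
    rw [hshift.tsum_eq_zero_add]
    simp only [add_zero, add_assoc, add_comm 1]
  rw [G, G, htail, Finset.sum_range_succ]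
  ring

lemma eq_zero_of_tendsto_zero_of_add_succ_eq_zero {E : Type*} [NormedAddCommGroup E]
    {d : ℕ → E} (hd : Tendsto d atTop (𝓝 0)) (hsucc : ∀ n, d n + d (n + 1) = 0) : d = 0 := by
  have hnorm : ∀ n, ‖d n‖ = ‖d 0‖ := by
    intro n
    induction n with
    | zero => rfl
    | succ n ih => rw [eq_neg_of_add_eq_zero_right (hsucc n), norm_neg, ih]
  have hlim : Tendsto (fun _ : ℕ => ‖d 0‖) atTop (𝓝 0) := by
    simpa only [hnorm, norm_zero] using hd.norm
  have h0 : ‖d 0‖ = 0 := tendsto_nhds_unique tendsto_const_nhds hlim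
  funext n
  exact norm_eq_zero.mp ((hnorm n).trans h0)

/-- `T x = {y : -G y = x}` is single valued on its domain. -/
theorem T_single_valued (x : ℕ → ℝ) (y y' : ℕ → ℝ)
    (hy : Summable fun i => |y i|) (hy' : Summable fun i => |y' i|)
    (h : (fun n => -G y n) = x) (h' : (fun n => -G y' n) = x) : y = y' := by
  have hs : Summable y := hy.of_abs
  have hs' : Summable y' := hy'.of_abs
  have hG : ∀ n, G y n = G y' n := fun n => neg_inj.mp (congrFun (h.trans h'.symm) n)
  have hsucc : ∀ n, (y - y') n + (y - y') (n + 1) = 0 := by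
    intro n
    have e := G_sub_G_succ hs n
    have e' := G_sub_G_succ hs' n
    simp only [Pi.sub_apply]
    linarith [hG n, hG (n + 1)]
  exact sub_eq_zero.mp
    (eq_zero_of_tendsto_zero_of_add_succ_eq_zero (hs.sub hs').tendsto_atTop_zero hsucc)
end

section
/- Suppose x ∈ c₀ and y ∈ ℓ¹ satisfy x_{m+1} − x_m = y_{m+1} + y_m for all m ≥ 1. Then for every i, x_i = −[y_i + 2∑_{k=i+1}^∞ y_k] = −[(G(y))_i + ∑_{k=1}^∞ y_k]. -/
/-!
With the tails `t n = ∑_{k ≥ n} y k`, the recurrence says exactly that `x n + t n + t (n+1)` does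
not depend on `n`. Since `x`, `t` tend to `0`, this constant is `0`, so
`x n = -(t n + t (n+1)) = -(y n + 2 t (n+1))`; the form with `G` is the same identity after
splitting `∑ y` at `n+1`.
-/

open Filter Topology

section TailSum

variable {E : Type*} [AddCommGroup E] [TopologicalSpace E] [IsTopologicalAddGroup E] [T2Space E]

noncomputable def tailSum (f : ℕ → E) (n : ℕ) : E := ∑' k, f (k + n)

theorem tailSum_eq_add_tailSum_succ {f : ℕ → E} (hf : Summable f) (n : ℕ) :
    tailSum f n = f n + tailSum f (n + 1) := by
  simpa only [tailSum, zero_add, add_right_comm _ 1 n, ← add_assoc] using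
    ((summable_nat_add_iff n).2 hf).tsum_eq_zero_add

end TailSum

theorem eq_of_tendsto_of_forall_succ_eq {X : Type*} [TopologicalSpace X] [T2Space X]
    {z : ℕ → X} {a : X} (hz : Tendsto z atTop (𝓝 a)) (h : ∀ n, z (n + 1) = z n) (n : ℕ) :
    z n = a := by
  have hconst : ∀ n, z n = z 0 := fun n => Nat.rec rfl (fun k ih => (h k).trans ih) n
  rw [hconst n]
  exact tendsto_nhds_unique (tendsto_const_nhds.congr fun n => (hconst n).symm) hz

theorem eq_neg_tailSum_add_tailSum_succ {x y : ℕ → ℝ} (hx : Tendsto x atTop (𝓝 0))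
    (hy : Summable y) (h : ∀ m, x (m + 1) - x m = y (m + 1) + y m) (n : ℕ) :
    x n = -(tailSum y n + tailSum y (n + 1)) := by
  set z : ℕ → ℝ := fun n => x n + tailSum y n + tailSum y (n + 1)
  have hz_succ : ∀ m, z (m + 1) = z m := fun m => by
    have := tailSum_eq_add_tailSum_succ hy m
    have := tailSum_eq_add_tailSum_succ hy (m + 1)
    have := h m
    simp only [z]
    linarith
  have htail : Tendsto (tailSum y) atTop (𝓝 0) := tendsto_sum_nat_add y
  have hz : Tendsto z atTop (𝓝 0) := by
    simpa using (hx.add htail).add (htail.comp (tendsto_add_atTop_nat 1))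
  have hz_zero := eq_of_tendsto_of_forall_succ_eq hz hz_succ n
  simp only [z] at hz_zero
  linarith

/-- If `x ∈ c₀`, `y ∈ l1` and `x (m+1) - x m = y (m+1) + y m` for all `m`, then
`x i = -(y i + 2 ∑_{k>i} y k) = -((G y) i + ∑ k, y k)`. -/
theorem recover_x_from_y (x y : ℕ → ℝ)
    (hx : Tendsto x atTop (𝓝 0)) (hy : Summable fun i => |y i|)
    (h : ∀ m, x (m + 1) - x m = y (m + 1) + y m) :
    ∀ i, x i = -(y i + 2 * ∑' k, y (i + 1 + k)) ∧ x i = -(G y i + ∑' k, y k) := by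
  intro i
  have hy' : Summable y := hy.of_abs
  have hx_i := eq_neg_tailSum_add_tailSum_succ hx hy' h i
  have h_step := tailSum_eq_add_tailSum_succ hy' i
  have h_total : ∑ k ∈ Finset.range (i + 1), y k + tailSum y (i + 1) = ∑' k, y k :=
    hy'.sum_add_tsum_nat_add (i + 1)
  have h_tail : ∑' k, y (i + 1 + k) = tailSum y (i + 1) := by simp only [tailSum, add_comm]
  rw [Finset.sum_range_succ] at h_total
  rw [G, h_tail]
  constructor <;> linarith
end

section
/- Let e = (1,1,1,…) ∈ ℓ∞ and T : c₀ ⇉ ℓ¹ with graph {(−G(y'), y') : y' ∈ ℓ¹, ∑_i y'_i = 0}. Then for every y ∈ ℓ¹, α ∈ ℝ, and (x', y') ∈ graph(T): ⟨−G(y) + α e − x', y − y'⟩ = α⟨y, e⟩, where the pairing is between ℓ∞ and ℓ¹. -/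
open Filter Topology

open Finset Asymptotics

variable {z : ℕ → ℝ}

lemma G_eq_tsum_sub_sum_sub_sum (hz : Summable z) (n : ℕ) :
    G z n = ∑' i, z i - ∑ i ∈ range n, z i - ∑ i ∈ range (n + 1), z i := by
  rw [G, ← hz.sum_add_tsum_nat_add (n + 1)]
  simp only [add_comm n 1, add_assoc, add_comm _ (1 + n)]
  ring

lemma G_sub {y y' : ℕ → ℝ} (hy : Summable y) (hy' : Summable y') (n : ℕ) :
    G (y - y') n = G y n - G y' n := by
  rw [G_eq_tsum_sub_sum_sub_sum (z := y - y') (hy.sub hy'), G_eq_tsum_sub_sum_sub_sum hy,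
    G_eq_tsum_sub_sum_sub_sum hy']
  simp only [Pi.sub_apply, hy.tsum_sub hy', sum_sub_distrib]
  ring

lemma tendsto_G_atTop (hz : Summable z) : Tendsto (G z) atTop (𝓝 (-∑' i, z i)) := by
  have hP : Tendsto (fun n => ∑ i ∈ range n, z i) atTop (𝓝 (∑' i, z i)) :=
    hz.hasSum.tendsto_sum_nat
  have hP' := hP.comp (tendsto_add_atTop_nat 1)
  convert ((tendsto_const_nhds (x := ∑' i, z i)).sub hP).sub hP' using 1
  · exact funext (G_eq_tsum_sub_sum_sub_sum hz)
  · rw [sub_self, zero_sub]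

lemma summable_G_mul_self (hz : Summable z) : Summable fun n => G z n * z n :=
  summable_of_isBigO_nat hz <| by
    simpa only [mul_one, mul_comm] using (isBigO_refl z atTop).mul ((tendsto_G_atTop hz).isBigO_one ℝ)

lemma sum_range_G_mul_self (hz : Summable z) (N : ℕ) :
    ∑ n ∈ range N, G z n * z n =
      (∑' i, z i) * ∑ i ∈ range N, z i - (∑ i ∈ range N, z i) ^ 2 := by
  induction N with
  | zero => simp
  | succ N ih =>
    rw [sum_range_succ, ih, G_eq_tsum_sub_sum_sub_sum hz, sum_range_succ]
    ring

lemma hasSum_G_mul_self (hz : Summable z) : HasSum (fun n => G z n * z n) 0 := by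
  rw [(summable_G_mul_self hz).hasSum_iff_tendsto_nat]
  have hP : Tendsto (fun n => ∑ i ∈ range n, z i) atTop (𝓝 (∑' i, z i)) :=
    hz.hasSum.tendsto_sum_nat
  convert (hP.const_mul (∑' i, z i)).sub (hP.pow 2) using 1
  · exact funext (sum_range_G_mul_self hz)
  · rw [sq, sub_self]

/-- With `e = (1,1,1,…)`: for `(x', y') = (-G y', y')` in the graph of `T` and any
`y ∈ l1`, `α ∈ ℝ`, one has `⟪-G y + α e - x', y - y'⟫ = α ⟪y, e⟫`. -/
theorem pairing_identity (y y' : ℕ → ℝ) (α : ℝ)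
    (hy : Summable fun i => |y i|) (hy' : Summable fun i => |y' i|)
    (hsum : (∑' i, y' i) = 0) :
    ∑' n, ((-G y n + α) - (-G y' n)) * (y n - y' n) = α * ∑' n, y n := by
  have hys : Summable y := summable_abs_iff.1 hy
  have hy's : Summable y' := summable_abs_iff.1 hy'
  have hz : HasSum (y - y') (∑' n, y n) := by
    have h := hys.hasSum.sub hy's.hasSum
    rwa [hsum, sub_zero] at h
  have hterm : ∀ n, ((-G y n + α) - (-G y' n)) * (y n - y' n) =
      α * (y - y') n - G (y - y') n * (y - y') n := by
    intro n
    rw [G_sub hys hy's, Pi.sub_apply]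
    ring
  simp only [hterm]
  rw [((hz.mul_left α).sub (hasSum_G_mul_self hz.summable)).tsum_eq, sub_zero]
end

section
/- Let X be a closed subspace of a real Banach space Ω, T : X ⇉ X* maximal monotone, and define S : Ω ⇉ Ω* by (w, w*) ∈ graph(S) iff w ∈ X and (w, w*|_X) ∈ graph(T). Then S is maximal monotone: any (z, z*) ∈ Ω × Ω* monotonically related to graph(S) satisfies z ∈ X and (z, z*|_X) ∈ graph(T). -/
/-!
If `z ∉ X`, Hahn–Banach gives `f ∈ Ω*` vanishing on `X` with `f z = 1`. Adding multiples of `f` to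
the dual component does not change the restriction to `X`, so the graph of `S` is invariant under
this shift, while the pairing with `(z, z*)` changes by `t ⟨w - z, f⟩ = -t`; choosing `t` large
makes it negative. Once `z ∈ X`, every element of the graph of `T` lifts to the graph of `S`
(again by Hahn–Banach), so `(z, z*|_X)` is monotonically related to `T` and maximality applies.
-/

section

variable {E : Type*} [NormedAddCommGroup E] [NormedSpace ℝ E] {X : Submodule ℝ E}

theorem Submodule.exists_strongDual_eq_zero_on_and_eq_one (hX : IsClosed (X : Set E)) {z : E}
    (hz : z ∉ X) : ∃ f : StrongDual ℝ E, (∀ w ∈ X, f w = 0) ∧ f z = 1 := by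
  -- the normed structure on `E ⧸ X` takes closedness as an instance
  have : IsClosed (X : Set E) := hX
  obtain ⟨f, hf⟩ := SeparatingDual.exists_eq_one (R := ℝ) (x := X.mkQ z)
    (by simpa [Submodule.Quotient.mk_eq_zero] using hz)
  refine ⟨f.comp X.mkQL, fun w hw => ?_, hf⟩
  simp [(Submodule.Quotient.mk_eq_zero X).2 hw]

variable {T : Set (X × StrongDual ℝ X)} {z : E} {z' : StrongDual ℝ E}

theorem mem_of_forall_lift_mem_le (hX : IsClosed (X : Set E)) (hT : T.Nonempty)
    (hrel : ∀ (w : E) (w' : StrongDual ℝ E) (hw : w ∈ X),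
      (⟨w, hw⟩, w'.comp X.subtypeL) ∈ T → 0 ≤ (w' - z') (w - z)) :
    z ∈ X := by
  by_contra hz
  obtain ⟨f, hfX, hfz⟩ := X.exists_strongDual_eq_zero_on_and_eq_one hX hz
  obtain ⟨p, hp⟩ := hT
  obtain ⟨g, hg⟩ := p.2.exist_extension_of_finiteDimensional_range
  set c := (g - z') (p.1 - z)
  have hlift : (g + (c + 1) • f).comp X.subtypeL = p.2 := by
    ext x
    simp [hg, hfX x x.2]
  have hpair : (g + (c + 1) • f - z') (p.1 - z) = -1 := by
    simp only [sub_apply, add_apply, smul_apply, smul_eq_mul, map_sub, hfX p.1 p.1.2, hfz, c]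
    ring
  have := hrel p.1 (g + (c + 1) • f) p.1.2 (by rwa [hlift])
  linarith

theorem restrict_le_of_forall_lift_mem_le (hz : z ∈ X)
    (hrel : ∀ (w : E) (w' : StrongDual ℝ E) (hw : w ∈ X),
      (⟨w, hw⟩, w'.comp X.subtypeL) ∈ T → 0 ≤ (w' - z') (w - z)) :
    ∀ p ∈ T, 0 ≤ (p.2 - z'.comp X.subtypeL) (p.1 - ⟨z, hz⟩) := by
  intro p hp
  obtain ⟨g, hg⟩ := p.2.exist_extension_of_finiteDimensional_range
  have := hrel p.1 g p.1.2 (by rwa [← hg])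
  simpa [hg] using this

end

theorem S_maximal_monotone_general (Ω : Type*) [NormedAddCommGroup Ω] [NormedSpace ℝ Ω]
    (X : Subspace ℝ Ω) (hX : IsClosed (X : Set Ω))
    (T : Set (X × (X →L[ℝ] ℝ)))
    (hTmax : ∀ (x : X) (x' : X →L[ℝ] ℝ),
      (∀ p ∈ T, 0 ≤ (p.2 - x') (p.1 - x)) → (x, x') ∈ T)
    (z : Ω) (z' : Ω →L[ℝ] ℝ)
    (hrel : ∀ (w : Ω) (w' : Ω →L[ℝ] ℝ) (hw : w ∈ X),
      (⟨w, hw⟩, w'.comp X.subtypeL) ∈ T → 0 ≤ (w' - z') (w - z)) :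
    ∃ hz : z ∈ X, (⟨z, hz⟩, z'.comp X.subtypeL) ∈ T := by
  -- if `T` were empty, `(0, 0)` would be vacuously monotonically related to it
  have hT : T.Nonempty := by_contra fun h => h ⟨_, hTmax 0 0 fun p hp => (h ⟨p, hp⟩).elim⟩
  have hz : z ∈ X := mem_of_forall_lift_mem_le hX hT hrel
  exact ⟨hz, hTmax _ _ (restrict_le_of_forall_lift_mem_le hz hrel)⟩

/-- Let `X` be a closed subspace of a real Banach space `Ω` and `T : X ⇉ X*`
maximal monotone. The operator `S : Ω ⇉ Ω*` with `(w, w*) ∈ S` iff `w ∈ X` and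
`(w, w*|_X) ∈ T` is maximal monotone: any `(z, z*)` monotonically related to the
graph of `S` satisfies `z ∈ X` and `(z, z*|_X) ∈ T`. -/
theorem S_maximal_monotone (Ω : Type*) [NormedAddCommGroup Ω] [NormedSpace ℝ Ω]
    [CompleteSpace Ω] (X : Subspace ℝ Ω) (hX : IsClosed (X : Set Ω))
    (T : Set (X × (X →L[ℝ] ℝ)))
    (hTmono : ∀ p ∈ T, ∀ q ∈ T, 0 ≤ (p.2 - q.2) (p.1 - q.1))
    (hTmax : ∀ (x : X) (x' : X →L[ℝ] ℝ),
      (∀ p ∈ T, 0 ≤ (p.2 - x') (p.1 - x)) → (x, x') ∈ T)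
    (z : Ω) (z' : Ω →L[ℝ] ℝ)
    (hrel : ∀ (w : Ω) (w' : Ω →L[ℝ] ℝ) (hw : w ∈ X),
      (⟨w, hw⟩, w'.comp X.subtypeL) ∈ T → 0 ≤ (w' - z') (w - z)) :
    ∃ hz : z ∈ X, (⟨z, hz⟩, z'.comp X.subtypeL) ∈ T :=
  S_maximal_monotone_general Ω X hX T hTmax z z' hrel
end

section
/- Let X be a closed subspace of a Banach space Ω, T : X ⇉ X*, and S : Ω ⇉ Ω* defined by (w, w*) ∈ graph(S) iff w ∈ X and (w, w*|_X) ∈ graph(T). Suppose there exist x* ∈ X*, x** ∈ X** with sup over (y, y*) ∈ graph(T) of [⟨y, x* − y*⟩ + ⟨y*, x**⟩] < ⟨x*, x**⟩. Let z* ∈ Ω* be any continuous extension of x* and define z** ∈ Ω** by ⟨z*, z**⟩ = ⟨z*|_X, x**⟩. Then sup over (w, w*) ∈ graph(S) of [⟨w, z*⟩ + ⟨w*, z**⟩ − ⟨w, w*⟩] < ⟨z*, z**⟩. -/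
theorem S_non_type_D_general (Ω : Type*) [NormedAddCommGroup Ω] [NormedSpace ℝ Ω]
    (X : Subspace ℝ Ω)
    (T : Set (X × (X →L[ℝ] ℝ)))
    (xstar : X →L[ℝ] ℝ) (xss : (X →L[ℝ] ℝ) →L[ℝ] ℝ)
    (hfail : ∃ c : ℝ, c < xss xstar ∧
      ∀ p ∈ T, (xstar - p.2) p.1 + xss p.2 ≤ c)
    (zstar : Ω →L[ℝ] ℝ) (hext : zstar.comp X.subtypeL = xstar) :
    ∃ c : ℝ, c < xss (zstar.comp X.subtypeL) ∧
      ∀ (w : Ω) (wstar : Ω →L[ℝ] ℝ) (hw : w ∈ X),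
        (⟨w, hw⟩, wstar.comp X.subtypeL) ∈ T →
        zstar w + xss (wstar.comp X.subtypeL) - wstar w ≤ c := by
  subst hext
  obtain ⟨c, hc, hT⟩ := hfail
  refine ⟨c, hc, fun w wstar hw hmem => ?_⟩
  have hbound := hT _ hmem
  simp only [sub_apply, ContinuousLinearMap.comp_apply,
    Submodule.subtypeL_apply] at hbound
  linarith

/-- If `T : X ⇉ X*` fails the type-(D) Fitzpatrick inequality at some
`(x*, x**) ∈ X* × X**`, then the extended operator `S : Ω ⇉ Ω*` fails it at
`(z*, z**)`, where `z*` is any continuous extension of `x*` and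
`⟪w*, z**⟫ = ⟪w*|_X, x**⟫`. -/
theorem S_non_type_D (Ω : Type*) [NormedAddCommGroup Ω] [NormedSpace ℝ Ω]
    [CompleteSpace Ω] (X : Subspace ℝ Ω) (hX : IsClosed (X : Set Ω))
    (T : Set (X × (X →L[ℝ] ℝ)))
    (xstar : X →L[ℝ] ℝ) (xss : (X →L[ℝ] ℝ) →L[ℝ] ℝ)
    (hfail : ∃ c : ℝ, c < xss xstar ∧
      ∀ p ∈ T, (xstar - p.2) p.1 + xss p.2 ≤ c)
    (zstar : Ω →L[ℝ] ℝ) (hext : zstar.comp X.subtypeL = xstar) :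
    ∃ c : ℝ, c < xss (zstar.comp X.subtypeL) ∧
      ∀ (w : Ω) (wstar : Ω →L[ℝ] ℝ) (hw : w ∈ X),
        (⟨w, hw⟩, wstar.comp X.subtypeL) ∈ T →
        zstar w + xss (wstar.comp X.subtypeL) - wstar w ≤ c :=
  S_non_type_D_general Ω X T xstar xss hfail zstar hext
end
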